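/- Let O ∈ H² be outer. If O⁻¹ · ker T_{z̄ Ō/O} ⊂ L²(𝕋), then ker T_{z̄ Ō/O} = ℂ·O, i.e. O is square-rigid. -/

import Mathlib

open MeasureTheory Complex
open scoped Real ComplexConjugate ENNReal

noncomputable section

namespace ToeplitzKernels

/-- We model the unit circle `𝕋` as `AddCircle (2 * π)`. -/
abbrev UnitCircle := AddCircle (2 * Real.pi)

instance : Fact (0 < 2 * Real.pi) := ⟨by positivity⟩

/-- The normalised Haar (arc-length) measure on the circle. -/
abbrev muT : Measure UnitCircle := AddCircle.haarAddCircle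

/-- `L²(𝕋)`. -/
abbrev L2T := Lp ℂ 2 muT

/-- The coordinate function `z` on the circle. -/
def zf : UnitCircle → ℂ := fun x => fourier 1 x

/-- A (plain) function belongs to `H²`: it is square integrable and all its Fourier
coefficients of negative index vanish. -/
def InH2 (f : UnitCircle → ℂ) : Prop :=
  MemLp f 2 muT ∧ ∀ n : ℤ, n < 0 → fourierCoeff f n = 0

/-- `H²` as a subset of `L²`. -/
def H2 : Set L2T :=
  {u | ∀ n : ℤ, n < 0 → fourierCoeff (u : UnitCircle → ℂ) n = 0}

/-- A function belongs to `H^∞`: it is a bounded member of `H²`. -/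
def InHinf (f : UnitCircle → ℂ) : Prop :=
  InH2 f ∧ MemLp f ⊤ muT

/-- `f` is outer: `f ∈ H²` and the closed linear span of `{zⁿ f : n ≥ 0}` in `L²` is `H²`. -/
def IsOuter (f : UnitCircle → ℂ) : Prop :=
  InH2 f ∧
    closure ((Submodule.span ℂ
        {u : L2T | ∃ n : ℕ, (u : UnitCircle → ℂ) =ᵐ[muT] fun x => zf x ^ n * f x} :
          Submodule ℂ L2T) : Set L2T) = H2

/-- `f` is inner: `f ∈ H²` (hence in `H^∞`) and `|f| = 1` a.e. on `𝕋`. -/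
def IsInner (f : UnitCircle → ℂ) : Prop :=
  InH2 f ∧ ∀ᵐ x ∂muT, ‖f x‖ = 1

/-- The kernel of the Toeplitz operator `T_g`, as a subset of `L²`: those `f ∈ H²` with
`P⁺(g f) = 0`, i.e. all Fourier coefficients of `g·f` of index `≥ 0` vanish. -/
def kerT (g : UnitCircle → ℂ) : Set L2T :=
  {u | u ∈ H2 ∧ ∀ n : ℤ, 0 ≤ n →
    fourierCoeff (fun x => g x * (u : UnitCircle → ℂ) x) n = 0}

/-- Membership of (the a.e. class of) a plain function in `ker T_g`. -/
def InKerT (g f : UnitCircle → ℂ) : Prop :=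
  InH2 f ∧ ∀ n : ℤ, 0 ≤ n → fourierCoeff (fun x => g x * f x) n = 0

/-- The model space `K_θ = ker T_{θ̄}`. -/
def modelSpace (θ : UnitCircle → ℂ) : Set L2T :=
  kerT fun x => conj (θ x)

/-- `f` is a maximal function of `ker T_g`: `f ∈ H²` and `g f = z̄ Ō` a.e. on `𝕋`
for some outer `O ∈ H²` (equivalently, `ker T_g` is the smallest Toeplitz kernel
containing `f`). -/
def IsMaximal (g f : UnitCircle → ℂ) : Prop :=
  InH2 f ∧ ∃ O : UnitCircle → ℂ, IsOuter O ∧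
    (fun x => g x * f x) =ᵐ[muT] fun x => conj (zf x) * conj (O x)

/-- The set `w·S ⊆ L²`, for a set `S ⊆ L²` of square-integrable functions. -/
def mulSet (w : UnitCircle → ℂ) (S : Set L2T) : Set L2T :=
  {u | ∃ v ∈ S, (u : UnitCircle → ℂ) =ᵐ[muT] fun x => w x * (v : UnitCircle → ℂ) x}

/-- `w·S ⊆ L²(𝕋)`. -/
def mulMapsIntoL2 (w : UnitCircle → ℂ) (S : Set L2T) : Prop :=
  ∀ v ∈ S, MemLp (fun x => w x * (v : UnitCircle → ℂ) x) 2 muT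

/-- `w⁻¹·S ⊆ L²(𝕋)`. -/
def invMulMapsIntoL2 (w : UnitCircle → ℂ) (S : Set L2T) : Prop :=
  ∀ v ∈ S, MemLp (fun x => (w x)⁻¹ * (v : UnitCircle → ℂ) x) 2 muT

/-- An outer function `O` is square-rigid if `ker T_{z̄ Ō / O} = ℂ · O`. -/
def IsSquareRigidOuter (O : UnitCircle → ℂ) : Prop :=
  kerT (fun x => conj (zf x) * conj (O x) / O x)
    = {u : L2T | ∃ c : ℂ, (u : UnitCircle → ℂ) =ᵐ[muT] fun x => c * O x}

/-- `w ∈ H²` is square-rigid if the outer factor of `w` is square-rigid. -/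
def IsSquareRigid (w : UnitCircle → ℂ) : Prop :=
  ∃ I O : UnitCircle → ℂ, IsInner I ∧ IsOuter O ∧
    (w =ᵐ[muT] fun x => I x * O x) ∧ IsSquareRigidOuter O

/-- The (linear) dimension of a subset of `L²` (the rank of its linear span). -/
def setDim (S : Set L2T) : Cardinal :=
  Module.rank ℂ (Submodule.span ℂ S)

/-- The value at a point `l` of the open unit disc of the holomorphic extension of a
function `f ∈ H²` on the boundary. -/
def diskValue (f : UnitCircle → ℂ) (l : ℂ) : ℂ :=
  ∑' n : ℕ, fourierCoeff f (n : ℤ) * l ^ n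

/-- The reproducing kernel `k_λ^θ = (1 - conj (θ(λ)) θ)/(1 - λ̄ z)` (boundary values). -/
def kFun (θ : UnitCircle → ℂ) (l : ℂ) : UnitCircle → ℂ :=
  fun x => (1 - conj (diskValue θ l) * θ x) / (1 - conj l * zf x)

/-- The conjugate kernel `k̃_λ^θ = (θ - θ(λ))/(z - λ)` (boundary values). -/
def ktFun (θ : UnitCircle → ℂ) (l : ℂ) : UnitCircle → ℂ :=
  fun x => (θ x - diskValue θ l) / (zf x - l)

/-- The conjugation `C_ḡ f = ḡ z̄ f̄` associated to a unimodular symbol `g`. -/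
def conjC (g f : UnitCircle → ℂ) : UnitCircle → ℂ :=
  fun x => conj (g x) * conj (zf x) * conj (f x)

/-- `α` is a finite Blaschke product with exactly `k` zeroes in `𝔻` (with multiplicity). -/
def IsFiniteBlaschke (α : UnitCircle → ℂ) (k : ℕ) : Prop :=
  ∃ (c : ℂ) (a : Fin k → ℂ), ‖c‖ = 1 ∧ (∀ i, ‖a i‖ < 1) ∧
    α =ᵐ[muT] fun x => c * ∏ i, (zf x - a i) / (1 - conj (a i) * zf x)


open Filter Topology

lemma norm_fourier (n : ℤ) (x : UnitCircle) : ‖fourier n x‖ = 1 := Circle.norm_coe _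

lemma zf_pow (n : ℕ) (x : UnitCircle) : zf x ^ n = fourier (n : ℤ) x := by
  induction n with
  | zero => simp [fourier_zero]
  | succ k ih =>
      rw [pow_succ, ih, zf, show ((k + 1 : ℕ) : ℤ) = (k : ℤ) + 1 by push_cast; ring, fourier_add]

lemma fourierCoeff_congr_ae {f g : UnitCircle → ℂ} (h : f =ᵐ[muT] g) (n : ℤ) :
    fourierCoeff f n = fourierCoeff g n :=
  integral_congr_ae (h.mono fun x hx => by simp only [hx])

lemma fourierCoeff_fourier_mul (k : ℤ) (f : UnitCircle → ℂ) (n : ℤ) :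
    fourierCoeff (fun x => fourier k x * f x) n = fourierCoeff f (n - k) := by
  unfold fourierCoeff
  refine integral_congr_ae (Filter.Eventually.of_forall fun x => ?_)
  simp only [smul_eq_mul, ← mul_assoc, ← fourier_add]
  congr 2
  ring

lemma fourierCoeff_conj (f : UnitCircle → ℂ) (n : ℤ) :
    fourierCoeff (fun x => conj (f x)) n = conj (fourierCoeff f (-n)) := by
  unfold fourierCoeff
  rw [← integral_conj]
  refine integral_congr_ae (Filter.Eventually.of_forall fun x => ?_)
  simp only [smul_eq_mul, map_mul, neg_neg]
  rw [fourier_neg]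

lemma fourierCoeff_one (n : ℤ) (hn : n ≠ 0) :
    fourierCoeff (fun _ : UnitCircle => (1 : ℂ)) n = 0 := by
  have h1 : (fun _ : UnitCircle => (1 : ℂ)) =ᵐ[muT]
      ((fourierLp 2 0 : Lp ℂ 2 muT) : UnitCircle → ℂ) := by
    filter_upwards [coeFn_fourierLp 2 (0 : ℤ)] with x hx
    rw [hx]
    exact fourier_zero.symm
  rw [fourierCoeff_congr_ae h1, ← fourierBasis_repr, ← coe_fourierBasis,
    HilbertBasis.repr_self]
  simp [lp.single_apply, hn]

lemma fourierCoeff_one_zero : fourierCoeff (fun _ : UnitCircle => (1 : ℂ)) 0 = 1 := by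
  unfold fourierCoeff
  simp [fourier_zero]

lemma one_mem_H2 : ((memLp_const (1 : ℂ) : MemLp _ 2 muT).toLp _) ∈ H2 := by
  intro n hn
  have h1 : (((memLp_const (1 : ℂ) : MemLp _ 2 muT).toLp _ : L2T) : UnitCircle → ℂ)
      =ᵐ[muT] fun _ => (1 : ℂ) := MemLp.coeFn_toLp _
  rw [fourierCoeff_congr_ae h1]
  exact fourierCoeff_one n hn.ne

/-- The key density machine: if `φ ∈ L²` is orthogonal to every `zⁿ O` for an outer `O`,
then `∫ conj φ = 0`. -/
lemma integral_conj_eq_zero_of_outer (O : UnitCircle → ℂ) (hO : IsOuter O)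
    (φ : UnitCircle → ℂ) (hφ : MemLp φ 2 muT)
    (hgen : ∀ n : ℕ, ∫ x, conj (φ x) * (zf x ^ n * O x) ∂muT = 0) :
    ∫ x, conj (φ x) ∂muT = 0 := by
  set Φ : L2T := hφ.toLp φ with hΦ
  have hΦc : (Φ : UnitCircle → ℂ) =ᵐ[muT] φ := MemLp.coeFn_toLp _
  set L : L2T →L[ℂ] ℂ := innerSL ℂ Φ with hL
  have hinner : ∀ u : L2T, L u = ∫ x, conj (φ x) * (u : UnitCircle → ℂ) x ∂muT := by
    intro u
    rw [hL, innerSL_apply_apply, MeasureTheory.L2.inner_def]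
    refine integral_congr_ae ?_
    filter_upwards [hΦc] with x hx
    rw [RCLike.inner_apply, hx, mul_comm]
  have hspan : Submodule.span ℂ
      {u : L2T | ∃ n : ℕ, (u : UnitCircle → ℂ) =ᵐ[muT] fun x => zf x ^ n * O x}
      ≤ L.ker := by
    rw [Submodule.span_le]
    rintro u ⟨n, hn⟩
    rw [SetLike.mem_coe, LinearMap.mem_ker, ContinuousLinearMap.coe_coe, hinner u]
    rw [show ∫ x, conj (φ x) * (u : UnitCircle → ℂ) x ∂muT
        = ∫ x, conj (φ x) * (zf x ^ n * O x) ∂muT from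
      integral_congr_ae (hn.mono fun x hx => by simp only [hx])]
    exact hgen n
  have hH2 : H2 ⊆ (L.ker : Set L2T) := by
    rw [← hO.2]
    exact closure_minimal hspan (ContinuousLinearMap.isClosed_ker L)
  have h0 : L ((memLp_const (1 : ℂ)).toLp _) = 0 := hH2 one_mem_H2
  rw [hinner] at h0
  rw [← h0]
  refine integral_congr_ae ?_
  filter_upwards [(MemLp.coeFn_toLp (memLp_const (1 : ℂ)) : _ =ᵐ[muT] fun _ => (1 : ℂ))] with x hx
  rw [hx, mul_one]

/-- An outer function is nonzero almost everywhere. -/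
lemma outer_ne_zero_ae (O : UnitCircle → ℂ) (hO : IsOuter O) :
    ∀ᵐ x ∂muT, O x ≠ 0 := by
  have hone : ((memLp_const (1 : ℂ) : MemLp _ 2 muT).toLp _) ∈ closure ((Submodule.span ℂ
      {u : L2T | ∃ n : ℕ, (u : UnitCircle → ℂ) =ᵐ[muT] fun x => zf x ^ n * O x} :
        Submodule ℂ L2T) : Set L2T) := by
    rw [hO.2]; exact one_mem_H2
  obtain ⟨f, hfS, hf⟩ := mem_closure_iff_seq_limit.mp hone
  have hq : ∀ j, ∃ q : UnitCircle → ℂ,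
      (f j : UnitCircle → ℂ) =ᵐ[muT] fun x => q x * O x := by
    intro j
    refine Submodule.span_induction ?_ ?_ ?_ ?_ (hfS j)
    · rintro u ⟨n, hn⟩
      exact ⟨fun x => zf x ^ n, hn⟩
    · exact ⟨0, by filter_upwards [Lp.coeFn_zero ℂ 2 muT] with x hx; simp [hx]⟩
    · rintro u w - - ⟨q₁, h₁⟩ ⟨q₂, h₂⟩
      refine ⟨fun x => q₁ x + q₂ x, ?_⟩
      filter_upwards [Lp.coeFn_add u w, h₁, h₂] with x hx h1 h2
      rw [hx, Pi.add_apply, h1, h2]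
      ring
    · rintro a u - ⟨q, hq⟩
      refine ⟨fun x => a * q x, ?_⟩
      filter_upwards [Lp.coeFn_smul a u, hq] with x hx h1
      rw [hx, Pi.smul_apply, h1, smul_eq_mul]
      ring
  choose q hq using hq
  set one : L2T := (memLp_const (1 : ℂ)).toLp _ with hone_def
  have hconv : Tendsto (fun j => eLpNorm ((f j : UnitCircle → ℂ) - (one : UnitCircle → ℂ)) 2 muT)
      atTop (𝓝 0) := (Lp.tendsto_Lp_iff_tendsto_eLpNorm' f one).mp hf
  have hmeas : TendstoInMeasure muT (fun j => ((f j : UnitCircle → ℂ))) atTop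
      (one : UnitCircle → ℂ) :=
    tendstoInMeasure_of_tendsto_eLpNorm (by norm_num)
      (fun j => Lp.aestronglyMeasurable (f j)) (Lp.aestronglyMeasurable one) hconv
  obtain ⟨ns, -, hns⟩ := hmeas.exists_seq_tendsto_ae
  have hae : ∀ᵐ x ∂muT, ∀ i : ℕ, (f (ns i) : UnitCircle → ℂ) x = q (ns i) x * O x :=
    ae_all_iff.mpr fun i => hq (ns i)
  have hone1 : (one : UnitCircle → ℂ) =ᵐ[muT] fun _ => (1 : ℂ) := MemLp.coeFn_toLp _
  filter_upwards [hns, hae, hone1] with x hx1 hx2 hx3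
  intro hO0
  have hz : Tendsto (fun i => (f (ns i) : UnitCircle → ℂ) x) atTop (𝓝 0) := by
    have hzz : (fun i => (f (ns i) : UnitCircle → ℂ) x) = fun _ => 0 :=
      funext fun i => by rw [hx2 i, hO0, mul_zero]
    rw [hzz]
    exact tendsto_const_nhds
  have h10 := tendsto_nhds_unique hx1 hz
  rw [hx3] at h10
  exact one_ne_zero h10

/-- If `O` is outer and `O⁻¹ · ker T_{z̄ Ō/O} ⊆ L²`, then
`ker T_{z̄ Ō/O} = ℂ·O`, i.e. `O` is square-rigid. -/
theorem squareRigid_of_invMul_into_L2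
    (O : UnitCircle → ℂ) (hO : IsOuter O)
    (h : invMulMapsIntoL2 O (kerT fun x => conj (zf x) * conj (O x) / O x)) :
    IsSquareRigidOuter O := by
  have hO0 : ∀ᵐ x ∂muT, O x ≠ 0 := outer_ne_zero_ae O hO
  unfold IsSquareRigidOuter
  ext u
  simp only [kerT, Set.mem_setOf_eq]
  constructor
  · intro hu
    have hv := h u hu
    obtain ⟨hu2, hker⟩ := hu
    set v : UnitCircle → ℂ := fun x => (O x)⁻¹ * (u : UnitCircle → ℂ) x with hvdef
    have huv : (fun x => O x * v x) =ᵐ[muT] (u : UnitCircle → ℂ) := by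
      filter_upwards [hO0] with x hx
      simp only [hvdef]
      field_simp
    have hs : ∀ n : ℤ, 1 ≤ n → fourierCoeff (fun x => conj (O x) * v x) n = 0 := by
      intro n hn
      have h0 := hker (n - 1) (by omega)
      have heq : (fun x => (conj (zf x) * conj (O x) / O x) * (u : UnitCircle → ℂ) x)
          = fun x => fourier (-1) x * (conj (O x) * v x) := by
        funext x
        simp only [hvdef, zf]
        rw [← fourier_neg, div_eq_mul_inv]
        ring
      rw [show (fun x => conj (zf x) * conj (O x) / O x * (u : UnitCircle → ℂ) x)
          = fun x => fourier (-1) x * (conj (O x) * v x) from heq,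
        fourierCoeff_fourier_mul] at h0
      rw [show n = n - 1 - (-1) by ring]
      exact h0
    have hv0 : ∀ m : ℤ, m ≠ 0 → fourierCoeff v m = 0 := by
      intro m hm
      have hφmeas : AEStronglyMeasurable (fun x => fourier (-m) x * v x) muT :=
        (map_continuous (fourier (-m))).aestronglyMeasurable.mul hv.aestronglyMeasurable
      have hφle : ∀ᵐ x ∂muT, ‖fourier (-m) x * v x‖ ≤ ‖v x‖ :=
        Filter.Eventually.of_forall fun x => by rw [norm_mul, norm_fourier, one_mul]
      have hφ : MemLp (fun x => fourier (-m) x * v x) 2 muT := MemLp.of_le hv hφmeas hφle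
      have hcoeff_eq : fourierCoeff v m = ∫ x, fourier (-m) x * v x ∂muT := by
        unfold fourierCoeff
        simp only [smul_eq_mul]
      rcases lt_or_gt_of_ne hm with hmlt | hmgt
      · -- m < 0 : pair against `u ∈ H²`
        have hφ' : MemLp (fun x => conj (fourier (-m) x * v x)) 2 muT := by
          refine MemLp.of_le hv ?_ ?_
          · exact continuous_star.comp_aestronglyMeasurable hφmeas
          · refine Filter.Eventually.of_forall fun x => ?_
            rw [RCLike.norm_conj, norm_mul, norm_fourier, one_mul]
        have key := integral_conj_eq_zero_of_outer O hO _ hφ' ?_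
        · rw [hcoeff_eq, ← key]
          refine integral_congr_ae (Filter.Eventually.of_forall fun x => ?_)
          simp only [Complex.conj_conj]
        · intro n
          have hae2 : ∀ᵐ x ∂muT,
              conj (conj (fourier (-m) x * v x)) * (zf x ^ n * O x)
              = fourier (-(m - (n : ℤ))) x • (u : UnitCircle → ℂ) x := by
            filter_upwards [huv] with x hx
            rw [Complex.conj_conj, smul_eq_mul, zf_pow, ← hx,
              show (-(m - (n : ℤ))) = -m + (n : ℤ) by ring, fourier_add]
            ring
          rw [integral_congr_ae hae2]
          have hcu := hu2 (m - (n : ℤ)) (by omega)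
          unfold fourierCoeff at hcu
          exact hcu
      · -- m > 0 : pair against the kernel condition
        have key := integral_conj_eq_zero_of_outer O hO _ hφ ?_
        · rw [integral_conj] at key
          rw [hcoeff_eq]
          have h2 := congrArg (starRingEnd ℂ) key
          rwa [Complex.conj_conj, map_zero] at h2
        · intro n
          have hconj_int : conj (∫ x, conj (fourier (-m) x * v x) * (zf x ^ n * O x) ∂muT)
              = ∫ x, fourier (-(m + (n : ℤ))) x • (conj (O x) * v x) ∂muT := by
            rw [← integral_conj]
            refine integral_congr_ae (Filter.Eventually.of_forall fun x => ?_)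
            simp only [map_mul, Complex.conj_conj, smul_eq_mul]
            rw [zf_pow, ← fourier_neg,
              show (-(m + (n : ℤ))) = -m + -(n : ℤ) by ring, fourier_add]
            ring
          have hcs := hs (m + (n : ℤ)) (by omega)
          unfold fourierCoeff at hcs
          have h2 : conj (∫ x, conj (fourier (-m) x * v x) * (zf x ^ n * O x) ∂muT) = 0 := by
            rw [hconj_int]
            exact hcs
          have h3 := congrArg (starRingEnd ℂ) h2
          rwa [Complex.conj_conj, map_zero] at h3
    -- v is a.e. constant
    set c : ℂ := fourierCoeff v 0 with hcdef
    have hvc : MemLp (fun x => v x - c) 2 muT := hv.sub (memLp_const c)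
    have hWc : ((hvc.toLp _ : L2T) : UnitCircle → ℂ) =ᵐ[muT] fun x => v x - c :=
      MemLp.coeFn_toLp _
    have hWcoeff : ∀ n : ℤ, fourierCoeff (((hvc.toLp _ : L2T)) : UnitCircle → ℂ) n = 0 := by
      intro n
      rw [fourierCoeff_congr_ae hWc]
      have hi1 : Integrable (fun x => fourier (-n) x • v x) muT := by
        refine MemLp.integrable (q := 2) (by norm_num) ?_
        refine MemLp.of_le hv
          ((map_continuous (fourier (-n))).aestronglyMeasurable.smul hv.aestronglyMeasurable) ?_
        refine Filter.Eventually.of_forall fun x => ?_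
        rw [smul_eq_mul, norm_mul, norm_fourier, one_mul]
      have hi2 : Integrable (fun x => fourier (-n) x • c) muT := by
        refine MemLp.integrable (q := 2) (by norm_num) ?_
        refine MemLp.of_le (memLp_const c)
          ((map_continuous (fourier (-n))).aestronglyMeasurable.smul aestronglyMeasurable_const) ?_
        refine Filter.Eventually.of_forall fun x => ?_
        rw [smul_eq_mul, norm_mul, norm_fourier, one_mul]
      have hsub : fourierCoeff (fun x => v x - c) n
          = fourierCoeff v n - fourierCoeff (fun _ : UnitCircle => c) n := by
        unfold fourierCoeff
        rw [← integral_sub hi1 hi2]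
        refine integral_congr_ae (Filter.Eventually.of_forall fun x => ?_)
        simp only [smul_eq_mul]
        ring
      have hconstc : fourierCoeff (fun _ : UnitCircle => c) n = if n = 0 then c else 0 := by
        have hcc : (fun _ : UnitCircle => c) = fun x => c * (fun _ : UnitCircle => (1 : ℂ)) x := by
          funext x; simp
        rw [hcc, fourierCoeff.const_mul]
        rcases eq_or_ne n 0 with rfl | hn
        · rw [fourierCoeff_one_zero, mul_one, if_pos rfl]
        · rw [fourierCoeff_one n hn, mul_zero, if_neg hn]
      rw [hsub, hconstc]
      rcases eq_or_ne n 0 with rfl | hn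
      · simp [hcdef]
      · rw [if_neg hn, hv0 n hn, sub_zero]
    have hrepr : fourierBasis.repr (hvc.toLp _ : L2T) = 0 := by
      apply lp.ext
      funext n
      rw [fourierBasis_repr]
      simpa using hWcoeff n
    have hW0 : (hvc.toLp _ : L2T) = 0 :=
      fourierBasis.repr.injective (by rw [hrepr, map_zero])
    have hvconst : v =ᵐ[muT] fun _ => c := by
      have h0 : ((hvc.toLp _ : L2T) : UnitCircle → ℂ) =ᵐ[muT] 0 := by
        rw [hW0]
        exact Lp.coeFn_zero ℂ 2 muT
      filter_upwards [hWc, h0] with x h1 h2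
      have h3 : v x - c = 0 := by rw [← h1]; exact h2
      exact sub_eq_zero.mp h3
    refine ⟨c, ?_⟩
    filter_upwards [huv, hvconst] with x h1 h2
    rw [← h1, h2]
    ring
  · rintro ⟨c, hc⟩
    constructor
    · intro n hn
      rw [fourierCoeff_congr_ae hc, fourierCoeff.const_mul, hO.1.2 n hn, mul_zero]
    · intro n hn
      have heq1 : (fun x => (conj (zf x) * conj (O x) / O x) * ((u : UnitCircle → ℂ) x))
          =ᵐ[muT] fun x => c * (fourier (-1) x * conj (O x)) := by
        filter_upwards [hc] with x hx
        rw [hx]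
        rcases eq_or_ne (O x) 0 with h0 | h0
        · simp [h0]
        · simp only [zf]
          rw [← fourier_neg]
          field_simp
      rw [show (fun x => conj (zf x) * conj (O x) / O x * ((u : UnitCircle → ℂ) x))
          = fun x => (conj (zf x) * conj (O x) / O x) * ((u : UnitCircle → ℂ) x) from rfl]
      rw [fourierCoeff_congr_ae heq1, fourierCoeff.const_mul, fourierCoeff_fourier_mul]
      rw [show (fun x => conj (O x)) = fun x => conj (O x) from rfl, fourierCoeff_conj,
        hO.1.2 (-(n - -1)) (by omega), map_zero, mul_zero]

end ToeplitzKernels
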